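/- River is Pareto-efficient: for every preference profile P, every tiebreaker τ for P, and alternatives a, b ∈ A(P), if every voter ranks a above b (i.e., a Pareto-dominates b), then b ∉ RV(P,τ). -/

import Mathlib

/-! ## Preference profiles -/

/-- A preference profile: a finite set of voters, a finite set of alternatives,
and for each voter a (Boolean-valued) preference relation, `pref i x y` meaning
voter `i` ranks `x` above `y`. -/
structure Profile (ν α : Type) where
  voters : Finset ν
  alts : Finset α
  pref : ν → α → α → Bool

namespace Profile

variable {ν α : Type}

/-- A profile is valid if there is at least one voter, at least two alternatives,
and every voter's preference is a strict linear order on the alternatives. -/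
def Valid (P : Profile ν α) : Prop :=
  P.voters.Nonempty ∧ 2 ≤ P.alts.card ∧
  (∀ i ∈ P.voters, ∀ a ∈ P.alts, ¬ P.pref i a a) ∧
  (∀ i ∈ P.voters, ∀ a ∈ P.alts, ∀ b ∈ P.alts, ∀ c ∈ P.alts,
      P.pref i a b → P.pref i b c → P.pref i a c) ∧
  (∀ i ∈ P.voters, ∀ a ∈ P.alts, ∀ b ∈ P.alts, a ≠ b → (P.pref i a b ↔ ¬ P.pref i b a))

/-- The majority margin of `x` over `y`. -/
def margin (P : Profile ν α) (x y : α) : ℤ :=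
  ((P.voters.filter (fun i => P.pref i x y)).card : ℤ) -
    ((P.voters.filter (fun i => P.pref i y x)).card : ℤ)

/-- The restriction of a profile to the alternatives other than `x`. -/
def restrict [DecidableEq α] (P : Profile ν α) (x : α) : Profile ν α :=
  ⟨P.voters, P.alts.erase x, P.pref⟩

/-- `y` Pareto-dominates `x`: every voter ranks `y` above `x`,
i.e. the margin of `y` over `x` equals the number of voters. -/
def ParetoDominates (P : Profile ν α) (y x : α) : Prop :=
  P.margin y x = P.voters.card

/-- A profile is uniquely weighted if no margin between distinct alternatives is zero and
distinct ordered pairs of distinct alternatives have distinct margins. -/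
def UniquelyWeighted (P : Profile ν α) : Prop :=
  (∀ x ∈ P.alts, ∀ y ∈ P.alts, x ≠ y → P.margin x y ≠ 0) ∧
  (∀ x ∈ P.alts, ∀ y ∈ P.alts, ∀ v ∈ P.alts, ∀ w ∈ P.alts,
      x ≠ y → v ≠ w → (x, y) ≠ (v, w) → P.margin x y ≠ P.margin v w)

end Profile

/-! ## Lists, precedence, tiebreakers -/

/-- `e` precedes `f` in the list `L`. -/
def Precedes {β : Type} (L : List β) (e f : β) : Prop :=
  ∃ l₁ l₂ l₃ : List β, L = l₁ ++ e :: (l₂ ++ f :: l₃)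

/-- A tiebreaker for a profile `P`: a linear order (list) of all ordered pairs of distinct
alternatives with nonnegative margin, in which pairs with strictly larger margin come first. -/
def IsTiebreaker {ν α : Type} (P : Profile ν α) (L : List (α × α)) : Prop :=
  L.Nodup ∧
  (∀ e : α × α, e ∈ L ↔ e.1 ∈ P.alts ∧ e.2 ∈ P.alts ∧ e.1 ≠ e.2 ∧ 0 ≤ P.margin e.1 e.2) ∧
  L.Pairwise (fun e f => P.margin f.1 f.2 ≤ P.margin e.1 e.2)

/-! ## The River method -/

open Classical in
/-- The River diagram: process the edges in the order given by `L`, adding an edge unless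
it would create a directed cycle or a second incoming edge at its target. -/
noncomputable def riverDiagram {α : Type} (L : List (α × α)) : Finset (α × α) :=
  L.foldl (fun E e =>
    if (∃ f ∈ E, f.2 = e.2) ∨ Relation.ReflTransGen (fun a b => (a, b) ∈ E) e.2 e.1
    then E else insert e E) ∅

open Classical in
/-- The River winners: the sources (vertices with no incoming edge) of the River diagram. -/
noncomputable def riverWinners {ν α : Type} (P : Profile ν α) (L : List (α × α)) : Finset α :=
  P.alts.filter (fun x => ∀ f ∈ riverDiagram L, f.2 ≠ x)

/-! ## Split Cycle -/

/-- The (cyclically) consecutive edges of a cycle given by a list of distinct vertices. -/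
def cycleEdges {α : Type} (c : List α) : List (α × α) := c.zip (c.rotate 1)

/-- A majority cycle: a cycle of distinct alternatives all of whose edges have positive margin. -/
def IsMajorityCycle {ν α : Type} (P : Profile ν α) (c : List α) : Prop :=
  c.Nodup ∧ (∀ a ∈ c, a ∈ P.alts) ∧ ∀ e ∈ cycleEdges c, 0 < P.margin e.1 e.2

/-- `e` is a splitting edge of some majority cycle: it attains the minimum margin on the cycle. -/
def IsSplittingEdge {ν α : Type} (P : Profile ν α) (e : α × α) : Prop :=
  ∃ c : List α, IsMajorityCycle P c ∧ e ∈ cycleEdges c ∧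
    ∀ f ∈ cycleEdges c, P.margin e.1 e.2 ≤ P.margin f.1 f.2

open Classical in
/-- The Split Cycle winners: alternatives with no incoming edge in the Split Cycle diagram,
whose edges are the positive-margin pairs that are not splitting edges of any majority cycle. -/
noncomputable def splitCycleWinners {ν α : Type} (P : Profile ν α) : Finset α :=
  P.alts.filter (fun x => ¬ ∃ y ∈ P.alts, 0 < P.margin y x ∧ ¬ IsSplittingEdge P (y, x))

/-! ## Ranked Pairs -/

/-- A processing order for Ranked Pairs: all pairs with positive margin,
ordered by decreasing margin. -/
def IsRPOrder {ν α : Type} (P : Profile ν α) (L : List (α × α)) : Prop :=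
  L.Nodup ∧
  (∀ e : α × α, e ∈ L ↔ e.1 ∈ P.alts ∧ e.2 ∈ P.alts ∧ 0 < P.margin e.1 e.2) ∧
  L.Pairwise (fun e f => P.margin f.1 f.2 ≤ P.margin e.1 e.2)

open Classical in
/-- The Ranked Pairs diagram: add each edge in order unless it would create a directed cycle. -/
noncomputable def rpDiagram {α : Type} (L : List (α × α)) : Finset (α × α) :=
  L.foldl (fun E e =>
    if Relation.ReflTransGen (fun a b => (a, b) ∈ E) e.2 e.1 then E else insert e E) ∅

open Classical in
/-- The Ranked Pairs winners: sources of the Ranked Pairs diagram. -/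
noncomputable def rpWinners {ν α : Type} (P : Profile ν α) (L : List (α × α)) : Finset α :=
  P.alts.filter (fun x => ∀ f ∈ rpDiagram L, f.2 ≠ x)

/-! ## Beat Path -/

/-- A majority path: a sequence of distinct alternatives with positive margins along it. -/
def IsMajorityPath {ν α : Type} (P : Profile ν α) (p : List α) : Prop :=
  p.Nodup ∧ (∀ a ∈ p, a ∈ P.alts) ∧ p.Chain' (fun a b => 0 < P.margin a b)

/-- `s_P(x,y)`: the maximum strength (minimum margin along the path) of a majority path
from `x` to `y`, and `0` if there is no such path. -/
noncomputable def beatPathStrength {ν α : Type} (P : Profile ν α) (x y : α) : ℤ :=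
  sSup ({0} ∪ {s : ℤ | ∃ p : List α, IsMajorityPath P p ∧ p.head? = some x ∧
    p.getLast? = some y ∧ ((p.zip p.tail).map (fun e => P.margin e.1 e.2)).min? = some s})

open Classical in
/-- The Beat Path winners. -/
noncomputable def beatPathWinners {ν α : Type} (P : Profile ν α) : Finset α :=
  P.alts.filter (fun x => ∀ y ∈ P.alts, y ≠ x →
    beatPathStrength P y x ≤ beatPathStrength P x y)

/-! ## Stable Voting -/

/-- Auxiliary, fuel-based definition of Stable Voting (for uniquely weighted profiles).
If only one alternative remains it wins; otherwise the winner is the alternative `x` of the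
first pair `(x,y)` (ordered by decreasing margin) with `m(x,y) > 0` and `x` a Split Cycle
winner, such that `x` is a Stable Voting winner of the profile without `y`. -/
noncomputable def svAux {ν α : Type} [DecidableEq α] : ℕ → Profile ν α → Set α
  | 0, P => ↑P.alts
  | (n+1), P =>
      if P.alts.card ≤ 1 then ↑P.alts
      else {x | x ∈ P.alts ∧ ∃ y ∈ P.alts, 0 < P.margin x y ∧ x ∈ splitCycleWinners P ∧
        x ∈ svAux n (P.restrict y) ∧
        ∀ x' ∈ P.alts, ∀ y' ∈ P.alts, 0 < P.margin x' y' → x' ∈ splitCycleWinners P →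
          P.margin x y < P.margin x' y' → x' ∉ svAux n (P.restrict y')}

/-- The Stable Voting winners (for uniquely weighted profiles). -/
noncomputable def svWinners {ν α : Type} [DecidableEq α] (P : Profile ν α) : Set α :=
  svAux P.alts.card P

/-! ## Smith set, covering, quasi-Pareto domination -/

/-- A dominant set of alternatives: nonempty, and each member defeats every non-member. -/
def IsDominant {ν α : Type} (P : Profile ν α) (X : Finset α) : Prop :=
  X.Nonempty ∧ X ⊆ P.alts ∧ ∀ x ∈ X, ∀ y ∈ P.alts, y ∉ X → 0 < P.margin x y

/-- The Smith set: the inclusion-minimal dominant set. -/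
def IsSmithSet {ν α : Type} (P : Profile ν α) (S : Finset α) : Prop :=
  IsDominant P S ∧ ∀ X : Finset α, IsDominant P X → S ⊆ X

/-- `y` covers `x`: `y` defeats `x` and does at least as well against every third alternative. -/
def Covers {ν α : Type} (P : Profile ν α) (y x : α) : Prop :=
  0 < P.margin y x ∧ ∀ z ∈ P.alts, z ≠ x → z ≠ y → P.margin x z ≤ P.margin y z

/-- `y` quasi-Pareto-dominates `x`. -/
def QuasiParetoDominates {ν α : Type} (P : Profile ν α) (y x : α) : Prop :=
  Covers P y x ∧ ∀ z ∈ P.alts, z ≠ x → z ≠ y →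
    P.margin z x ≤ P.margin y x ∧ P.margin x z ≤ P.margin y x

/-! ## Tiebreaker functions -/

/-- A consistent tiebreaker function: it assigns a tiebreaker to every profile, and the relative
order of two edges not involving `x` is unchanged when `x` is removed from the profile. -/
def IsConsistentTBF {ν α : Type} [DecidableEq α] (T : Profile ν α → List (α × α)) : Prop :=
  (∀ P : Profile ν α, IsTiebreaker P (T P)) ∧
  ∀ (P : Profile ν α) (x a b c d : α), x ∈ P.alts →
    x ≠ a → x ≠ b → x ≠ c → x ≠ d →
    (a, b) ∈ T P → (c, d) ∈ T P →
    (Precedes (T P) (a, b) (c, d) ↔ Precedes (T (P.restrict x)) (a, b) (c, d))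

/-- A Pareto-consistent tiebreaker function: consistent, and whenever `y` Pareto-dominates `x`,
the edge `(y,z)` precedes the edge `(x,z)` for every third alternative `z`. -/
def IsParetoConsistentTBF {ν α : Type} [DecidableEq α]
    (T : Profile ν α → List (α × α)) : Prop :=
  IsConsistentTBF T ∧
  ∀ (P : Profile ν α) (x y z : α), P.ParetoDominates y x →
    z ≠ x → z ≠ y → (y, z) ∈ T P → (x, z) ∈ T P → Precedes (T P) (y, z) (x, z)

/-- A quasi-Pareto-consistent tiebreaker function. -/
def IsQuasiParetoConsistentTBF {ν α : Type} [DecidableEq α]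
    (T : Profile ν α → List (α × α)) : Prop :=
  IsParetoConsistentTBF T ∧
  (∀ (P : Profile ν α) (x y y' : α),
      P.margin y x = P.margin y' x → QuasiParetoDominates P y x →
      ¬ QuasiParetoDominates P y' x →
      (y, x) ∈ T P → (y', x) ∈ T P → Precedes (T P) (y, x) (y', x)) ∧
  (∀ (P : Profile ν α) (x y z : α), QuasiParetoDominates P y x →
      ((x, z) ∈ T P → (y, z) ∈ T P → Precedes (T P) (y, z) (x, z)) ∧
      ((x, z) ∈ T P → (y, x) ∈ T P → Precedes (T P) (y, x) (x, z)))

/-- A tiebreaker for `P` induced by the fixed tie-breaking order `r` on pairs: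
edges are ordered by decreasing margin, ties in margin broken according to `r`. -/
def IsTiebreakerVia {ν α : Type} (r : α × α → α × α → Prop) (P : Profile ν α)
    (L : List (α × α)) : Prop :=
  IsTiebreaker P L ∧ ∀ e f : α × α, Precedes L e f →
    P.margin f.1 f.2 < P.margin e.1 e.2 ∨ (P.margin e.1 e.2 = P.margin f.1 f.2 ∧ r e f)

/-!
Every pair that the tiebreaker lists before `(a, b)` has margin at least `m(a, b) = |N|`, so it is
ranked the same way by all voters. Hence, by transitivity of the voters' orders, the diagram built
before `(a, b)` is processed contains no path from `b` to `a`: such a path would make every voter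
prefer `b` to `a`. So when `(a, b)` is reached, either `b` already has an incoming edge or `(a, b)`
is added, and River never removes edges.
-/

namespace Profile

variable {ν α : Type} (P : Profile ν α)

def Unanimous (x y : α) : Prop :=
  x ∈ P.alts ∧ y ∈ P.alts ∧ ∀ i ∈ P.voters, P.pref i x y

lemma margin_le_card (x y : α) : P.margin x y ≤ P.voters.card := by
  have := Finset.card_filter_le P.voters (fun i => P.pref i x y)
  unfold margin
  omega

variable {P}

lemma ParetoDominates.pref {x y : α} (h : P.ParetoDominates y x) :
    ∀ i ∈ P.voters, P.pref i y x := by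
  refine Finset.card_filter_eq_iff.mp ?_
  have := Finset.card_filter_le P.voters (fun i => P.pref i x y)
  have := Finset.card_filter_le P.voters (fun i => P.pref i y x)
  unfold ParetoDominates margin at h
  omega

lemma ParetoDominates.ne {x y : α} (hv : P.voters.Nonempty) (h : P.ParetoDominates y x) :
    y ≠ x := by
  rintro rfl
  have : P.margin y y = 0 := sub_self _
  unfold ParetoDominates at h
  have := hv.card_pos
  omega

lemma Valid.transGen_unanimous {x y : α} (hP : P.Valid)
    (h : Relation.TransGen P.Unanimous x y) : P.Unanimous x y := by
  induction h with
  | single h => exact h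
  | tail _ hyz ih =>
      exact ⟨ih.1, hyz.2.1, fun i hi =>
        hP.2.2.2.1 i hi _ ih.1 _ ih.2.1 _ hyz.2.1 (ih.2.2 i hi) (hyz.2.2 i hi)⟩

lemma Valid.not_unanimous_of_paretoDominates {a b : α} (hP : P.Valid)
    (ha : a ∈ P.alts) (hb : b ∈ P.alts) (h : P.ParetoDominates a b) : ¬ P.Unanimous b a := by
  rintro ⟨-, -, hba⟩
  obtain ⟨i, hi⟩ := hP.1
  have hab := (hP.2.2.2.2 i hi a ha b hb (h.ne hP.1)).mp (h.pref i hi)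
  exact hab (hba i hi)

end Profile

section Tiebreaker

variable {ν α : Type} {P : Profile ν α}

lemma IsTiebreaker.mem_of_paretoDominates {L : List (α × α)} (hL : IsTiebreaker P L)
    (hv : P.voters.Nonempty) {a b : α} (ha : a ∈ P.alts) (hb : b ∈ P.alts)
    (h : P.ParetoDominates a b) : (a, b) ∈ L :=
  (hL.2.1 (a, b)).mpr ⟨ha, hb, h.ne hv, (show P.margin a b = _ from h) ▸ Int.natCast_nonneg _⟩

lemma IsTiebreaker.paretoDominates_of_mem_prefix
    {l₁ l₂ : List (α × α)} {a b : α} (hL : IsTiebreaker P (l₁ ++ (a, b) :: l₂))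
    (hab : P.ParetoDominates a b) {e : α × α} (he : e ∈ l₁) :
    P.ParetoDominates e.1 e.2 := by
  have hle : P.margin a b ≤ P.margin e.1 e.2 :=
    (List.pairwise_append.mp hL.2.2).2.2 e he (a, b) List.mem_cons_self
  have := P.margin_le_card e.1 e.2
  unfold Profile.ParetoDominates at hab ⊢
  omega

end Tiebreaker

section River

variable {α : Type}

open Classical

noncomputable def riverStep (E : Finset (α × α)) (e : α × α) : Finset (α × α) :=
  if (∃ f ∈ E, f.2 = e.2) ∨ Relation.ReflTransGen (fun a b => (a, b) ∈ E) e.2 e.1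
  then E else insert e E

lemma subset_riverStep (E : Finset (α × α)) (e : α × α) : E ⊆ riverStep E e := by
  unfold riverStep
  split
  · exact subset_rfl
  · exact Finset.subset_insert _ _

lemma subset_foldl_riverStep (l : List (α × α)) (E : Finset (α × α)) :
    E ⊆ l.foldl riverStep E := by
  induction l generalizing E with
  | nil => exact subset_rfl
  | cons e l ih => exact (subset_riverStep E e).trans (ih _)

lemma mem_foldl_riverStep {l : List (α × α)} {E : Finset (α × α)} {f : α × α}
    (hf : f ∈ l.foldl riverStep E) : f ∈ E ∨ f ∈ l := by
  induction l generalizing E with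
  | nil => exact Or.inl hf
  | cons e l ih =>
      rcases ih hf with h | h
      · unfold riverStep at h
        split at h
        · exact Or.inl h
        · rcases Finset.mem_insert.mp h with rfl | h
          · exact Or.inr List.mem_cons_self
          · exact Or.inl h
      · exact Or.inr (List.mem_cons_of_mem _ h)

lemma exists_incoming_riverStep {E : Finset (α × α)} {e : α × α}
    (he : ¬ Relation.ReflTransGen (fun a b => (a, b) ∈ E) e.2 e.1) :
    ∃ f ∈ riverStep E e, f.2 = e.2 := by
  by_cases hin : ∃ f ∈ E, f.2 = e.2
  · obtain ⟨f, hf, hf2⟩ := hin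
    exact ⟨f, subset_riverStep E e hf, hf2⟩
  · refine ⟨e, ?_, rfl⟩
    rw [riverStep, if_neg (not_or.mpr ⟨hin, he⟩)]
    exact Finset.mem_insert_self _ _

lemma exists_incoming_riverDiagram {l₁ l₂ : List (α × α)} {e : α × α}
    (he : ¬ Relation.ReflTransGen (fun a b => (a, b) ∈ l₁.foldl riverStep ∅) e.2 e.1) :
    ∃ f ∈ riverDiagram (l₁ ++ e :: l₂), f.2 = e.2 := by
  obtain ⟨f, hf, hf2⟩ := exists_incoming_riverStep he
  refine ⟨f, ?_, hf2⟩
  change f ∈ (l₁ ++ e :: l₂).foldl riverStep ∅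
  rw [List.foldl_append, List.foldl_cons]
  exact subset_foldl_riverStep l₂ _ hf

end River

theorem river_pareto_efficient {ν α : Type} (P : Profile ν α) (hP : P.Valid)
    (L : List (α × α)) (hL : IsTiebreaker P L)
    (a b : α) (ha : a ∈ P.alts) (hb : b ∈ P.alts) (hdom : P.ParetoDominates a b) :
    b ∉ riverWinners P L := by
  obtain ⟨l₁, l₂, rfl⟩ := List.append_of_mem (hL.mem_of_paretoDominates hP.1 ha hb hdom)
  have hunan : ∀ e ∈ l₁.foldl riverStep ∅, P.Unanimous e.1 e.2 := by
    intro e he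
    have he₁ : e ∈ l₁ := (mem_foldl_riverStep he).resolve_left (Finset.notMem_empty e)
    obtain ⟨h₁, h₂, -, -⟩ := (hL.2.1 e).mp (List.mem_append_left _ he₁)
    exact ⟨h₁, h₂, (hL.paretoDominates_of_mem_prefix hdom he₁).pref⟩
  have hnopath : ¬ Relation.ReflTransGen (fun u v => (u, v) ∈ l₁.foldl riverStep ∅) b a := by
    intro h
    rcases Relation.reflTransGen_iff_eq_or_transGen.mp h with rfl | hpath
    · exact hdom.ne hP.1 rfl
    · exact hP.not_unanimous_of_paretoDominates ha hb hdom <| hP.transGen_unanimous <|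
        Relation.TransGen.mono (fun u v huv => hunan (u, v) huv) _ _ hpath
  obtain ⟨f, hf, hfb⟩ := exists_incoming_riverDiagram (e := (a, b)) (l₂ := l₂) hnopath
  classical
  intro hwin
  exact (Finset.mem_filter.mp hwin).2 f hf hfb
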